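/- Let 𝒢=(V,E) be a temporal graph, R=(v_1,…,v_k) a route in 𝒢, and x,δ∈ℕ. Define the table A by A_{R_1}[y]=0 for all 0≤y≤x, and A_{R_i}[y] = max_{0≤y'≤y} arrival(v_{i−1}, v_i, A_{R_{i−1}}[y'], y−y') for 2≤i≤k, where for vertices v,w, a value t∈ℕ∪{∞} and y∈ℕ: arrival(v,w,t,y)=∞ if t=∞ or E(v,w,t)=∅, and otherwise arrival(v,w,t,y)=min{t(a_1)+λ(a_1)+δ, t(a_{y+1})+λ(a_{y+1})} where a_1,…,a_ℓ lists E(v,w,t)={(v,w,t',λ)∈E : t'≥t} in nondecreasing order of arrival time t(a)+λ(a) and the second term is omitted if ℓ≤y. Then for every j∈[k] and every 0≤y≤x, A_{R_j}[y] equals the worst-case arrival time of the prefix route R_j=(v_1,…,v_j) for y delays. -/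

import Mathlib

/-- A time arc of a temporal graph: start vertex, end vertex, time label, traversal time. -/
structure TimeArc (V : Type) where
  src : V
  dst : V
  time : ℕ
  trav : ℕ
deriving DecidableEq

variable {V : Type}

/-- `P` is a `D`-traversal-delayed temporal walk in the temporal graph with time-arc set `E`
(with delay time `δ`). -/
def IsTDWalk [DecidableEq V] (E D : Finset (TimeArc V)) (δ : ℕ)
    (P : List (TimeArc V)) : Prop :=
  (∀ e ∈ P, e ∈ E) ∧
  P.Chain' (fun e f => f.src = e.dst ∧
    e.time + e.trav + (if e ∈ D then δ else 0) ≤ f.time)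

/-- `P` is a `D`-starting-delayed temporal walk in the temporal graph with time-arc set `E`
(with delay time `δ`). -/
def IsSDWalk [DecidableEq V] (E D : Finset (TimeArc V)) (δ : ℕ)
    (P : List (TimeArc V)) : Prop :=
  (∀ e ∈ P, e ∈ E) ∧
  P.Chain' (fun e f => f.src = e.dst ∧
    e.time + e.trav + (if e ∈ D then δ else 0) ≤ f.time + (if f ∈ D then δ else 0))

/-- The sequence of vertices visited by a walk: the start vertex of its first arc followed by
the end vertices of all its arcs. -/
def visits : List (TimeArc V) → List V
  | [] => []
  | e :: es => e.src :: (e :: es).map TimeArc.dst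

/-- The walk `P` follows the route `R`: the visited vertex sequence of `P` equals `R`
(the empty walk follows every single-vertex route). -/
def Follows (P : List (TimeArc V)) (R : List V) : Prop :=
  match P with
  | [] => ∃ v, R = [v]
  | e :: es => visits (e :: es) = R

/-- `R` is a `D`-traversal-delayed route: some `D`-traversal-delayed temporal walk follows `R`. -/
def IsTDRoute [DecidableEq V] (E D : Finset (TimeArc V)) (δ : ℕ) (R : List V) : Prop :=
  ∃ P : List (TimeArc V), IsTDWalk E D δ P ∧ Follows P R

/-- `R` is a `D`-starting-delayed route: some `D`-starting-delayed temporal walk follows `R`. -/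
def IsSDRoute [DecidableEq V] (E D : Finset (TimeArc V)) (δ : ℕ) (R : List V) : Prop :=
  ∃ P : List (TimeArc V), IsSDWalk E D δ P ∧ Follows P R

/-- `R` is `x`-traversal-delay-robust: it is a `D`-traversal-delayed route for every
`D ⊆ E` with `|D| ≤ x`. -/
def TDRobust [DecidableEq V] (E : Finset (TimeArc V)) (δ x : ℕ) (R : List V) : Prop :=
  ∀ D : Finset (TimeArc V), D ⊆ E → D.card ≤ x → IsTDRoute E D δ R

/-- `R` is `x`-starting-delay-robust: it is a `D`-starting-delayed route for every
`D ⊆ E` with `|D| ≤ x`. -/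
def SDRobust [DecidableEq V] (E : Finset (TimeArc V)) (δ x : ℕ) (R : List V) : Prop :=
  ∀ D : Finset (TimeArc V), D ⊆ E → D.card ≤ x → IsSDRoute E D δ R

/-- Earliest `D`-delayed arrival time of a route `R` (with traversal delays of `δ` on the
arcs of `D`): the minimum over all `D`-traversal-delayed temporal walks following `R` of the
delayed arrival time of the last arc; `⊤` (i.e. `∞`) if no such walk exists. -/
noncomputable def earliestArrival [DecidableEq V] (E D : Finset (TimeArc V)) (δ : ℕ)
    (R : List V) : ℕ∞ :=
  sInf {m : ℕ∞ | ∃ P : List (TimeArc V), IsTDWalk E D δ P ∧ Follows P R ∧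
    ∃ e : TimeArc V, P.getLast? = some e ∧
      m = ((e.time + e.trav + (if e ∈ D then δ else 0) : ℕ) : ℕ∞)}

/-- Worst-case arrival time of a route `R` for `y` delays: the maximum of the earliest
`D`-delayed arrival time over all `D ⊆ E` with `|D| ≤ y`; for a single-vertex route it is `0`. -/
noncomputable def worstArrival [DecidableEq V] (E : Finset (TimeArc V)) (δ : ℕ)
    (R : List V) (y : ℕ) : ℕ∞ :=
  if R.length ≤ 1 then 0
  else sSup {m : ℕ∞ | ∃ D : Finset (TimeArc V), D ⊆ E ∧ D.card ≤ y ∧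
    m = earliestArrival E D δ R}

/-- The function `arrival(v, w, t, y)`: worst-case single-step delayed arrival time from `v`
to `w` when starting at time `t` with up to `y` delays. It is `∞` if `t = ∞` or
`E(v,w,t) = ∅`; otherwise it equals `min (t(a₁)+λ(a₁)+δ) (t(a_{y+1})+λ(a_{y+1}))` where
`a₁, …, a_ℓ` lists `E(v,w,t)` in nondecreasing order of arrival time, the second term being
omitted if `ℓ ≤ y`. -/
noncomputable def arrivalFn [DecidableEq V] (E : Finset (TimeArc V)) (δ : ℕ) (v w : V)
    (t : ℕ∞) (y : ℕ) : ℕ∞ :=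
  if t = ⊤ then ⊤
  else
    let t0 : ℕ := WithTop.untopD 0 t
    let S : List ℕ :=
      ((E.filter (fun a => a.src = v ∧ a.dst = w ∧ t0 ≤ a.time)).val.map
        (fun a => a.time + a.trav)).sort (· ≤ ·)
    match S, S[y]? with
    | [], _ => ⊤
    | a :: _, some b => min ((a + δ : ℕ) : ℕ∞) ((b : ℕ) : ℕ∞)
    | a :: _, none => ((a + δ : ℕ) : ℕ∞)

/-- The dynamic-programming table, computed on the *reversed* route:
`dpRev E δ (Rⱼ.reverse) y` is the table entry `A_{Rⱼ}[y]`; the base case is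
`A_{R₁}[y] = 0` and `A_{Rᵢ}[y] = max_{0 ≤ y' ≤ y} arrival(v_{i-1}, v_i, A_{R_{i-1}}[y'], y - y')`. -/
noncomputable def dpRev [DecidableEq V] (E : Finset (TimeArc V)) (δ : ℕ) : List V → ℕ → ℕ∞
  | [], _ => 0
  | [_], _ => 0
  | w :: v :: rest, y =>
      (Finset.range (y + 1)).sup
        (fun y' => arrivalFn E δ v w (dpRev E δ (v :: rest) y') (y - y'))

/-!
The table is correct by induction along the route; everything happens in one hop from `v` to
`w`. An adversary with `y` delays spends `y'` of them before `v` and the rest on the arcs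
from `v` to `w` departing after the arrival time `t` at `v`. Against `k` delays on these arcs
the traveller takes either the earliest-arriving arc (possibly delayed) or an undelayed one,
and among the `k + 1` earliest-arriving arcs one is undelayed; conversely, delaying the `k`
earliest-arriving arcs forces exactly this. Delays on arcs departing at or after `t` cannot
change `t`, so the split of the delays costs the adversary nothing.
-/

section HopArrival

lemma List.SortedLE.succ_le_countP_le_getElem {β : Type*} [LinearOrder β] {L : List β}
    (hL : L.SortedLE) {k : ℕ} (hk : k < L.length) :
    k + 1 ≤ L.countP (· ≤ L[k]) := by
  have htake : ∀ b ∈ L.take (k + 1), b ≤ L[k] := by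
    intro b hb
    obtain ⟨i, hi, rfl⟩ := List.getElem_of_mem hb
    simp only [List.length_take, lt_min_iff] at hi
    rw [List.getElem_take]
    exact hL.getElem_le_getElem_of_le (by omega)
  have hsub := (List.take_sublist (k + 1) L).countP_le (p := (· ≤ L[k]))
  rwa [List.countP_eq_length.mpr (by simpa using htake), List.length_take, min_eq_left hk] at hsub

lemma List.SortedLE.countP_lt_getElem_le {β : Type*} [LinearOrder β] {L : List β}
    (hL : L.SortedLE) {k : ℕ} (hk : k < L.length) :
    L.countP (· < L[k]) ≤ k := by
  have hdrop : (L.drop k).countP (· < L[k]) = 0 := by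
    refine List.countP_eq_zero.mpr fun b hb => ?_
    obtain ⟨i, hi, rfl⟩ := List.getElem_of_mem hb
    rw [List.getElem_drop]
    simpa using hL.getElem_le_getElem_of_le (Nat.le_add_right k i)
  calc L.countP (· < L[k]) = (L.take k).countP (· < L[k]) + (L.drop k).countP (· < L[k]) := by
        rw [← List.countP_append, List.take_append_drop]
    _ ≤ k := by
        rw [hdrop, add_zero]
        exact List.countP_le_length.trans (List.length_take_le _ _)

noncomputable def hopArrival (δ : ℕ) (L : List ℕ) (k : ℕ) : ℕ∞ :=
  match L, L[k]? with
  | [], _ => ⊤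
  | a :: _, some b => min ((a + δ : ℕ) : ℕ∞) ((b : ℕ) : ℕ∞)
  | a :: _, none => ((a + δ : ℕ) : ℕ∞)

lemma le_hopArrival_iff {x : ℕ∞} {δ k : ℕ} {L : List ℕ} :
    x ≤ hopArrival δ L k ↔
      (∀ b ∈ L.head?, x ≤ ((b + δ : ℕ) : ℕ∞)) ∧
        ∀ hk : k < L.length, x ≤ (L[k] : ℕ∞) := by
  match L with
  | [] => simp [hopArrival]
  | b :: L =>
    rcases lt_or_ge k (b :: L).length with hk | hk
    · simp only [hopArrival, List.getElem?_eq_getElem hk, le_min_iff, List.head?_cons,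
        Option.mem_def, Option.some.injEq, forall_eq']
      exact ⟨fun h => ⟨h.1, fun _ => h.2⟩, fun h => ⟨h.1, h.2 hk⟩⟩
    · simp only [hopArrival, List.getElem?_eq_none hk, List.head?_cons, Option.mem_def,
        Option.some.injEq, forall_eq']
      exact ⟨fun h => ⟨h, fun hk' => absurd hk' (not_lt.mpr hk)⟩, fun h => h.1⟩

lemma hopArrival_le_getElem {δ k : ℕ} {L : List ℕ} (hk : k < L.length) :
    hopArrival δ L k ≤ L[k] :=
  (le_hopArrival_iff.mp le_rfl).2 hk

lemma hopArrival_le_add_of_mem {δ k x : ℕ} {L : List ℕ} (hL : L.SortedLE) (hx : x ∈ L) :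
    hopArrival δ L k ≤ ((x + δ : ℕ) : ℕ∞) := by
  obtain ⟨b, L, rfl⟩ := List.exists_cons_of_ne_nil (List.ne_nil_of_mem hx)
  have hbx : b ≤ x := by
    rcases List.mem_cons.mp hx with rfl | hx
    · exact le_rfl
    · exact List.rel_of_pairwise_cons hL.pairwise hx
  exact ((le_hopArrival_iff.mp le_rfl).1 b rfl).trans
    (by exact_mod_cast Nat.add_le_add_right hbx δ)

lemma card_filter_eq_countP_sort {α : Type*} (S : Finset α) (a : α → ℕ) (p : ℕ → Prop)
    [DecidablePred p] :
    (S.filter (fun e => p (a e))).card =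
      ((S.val.map a).sort (· ≤ ·)).countP (fun b => p b) := by
  rw [← Multiset.coe_countP, Multiset.sort_eq, Multiset.countP_map, Finset.card_def,
    Finset.filter_val]

variable {α : Type*} [DecidableEq α]

lemma inf_le_hopArrival (S D : Finset α) (a : α → ℕ) {δ k : ℕ}
    (hD : (D ∩ S).card ≤ k) :
    S.inf (fun e => ((a e + if e ∈ D then δ else 0 : ℕ) : ℕ∞)) ≤
      hopArrival δ ((S.val.map a).sort (· ≤ ·)) k := by
  set L := (S.val.map a).sort (· ≤ ·)
  have hsorted : L.SortedLE := (Multiset.pairwise_sort _ _).sortedLE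
  refine le_hopArrival_iff.mpr ⟨fun b hb => ?_, fun hk => ?_⟩
  · obtain ⟨e, he, rfl⟩ : ∃ e ∈ S, a e = b := by
      simpa [L, Multiset.mem_sort] using List.mem_of_mem_head? hb
    refine (Finset.inf_le he).trans ?_
    split_ifs <;> simp
  · -- among the `k + 1` arcs with the smallest arrival times one is not delayed
    have hcard : (D ∩ S).card < (S.filter (fun e => a e ≤ L[k])).card :=
      hD.trans_lt ((hsorted.succ_le_countP_le_getElem hk).trans_eq
        (card_filter_eq_countP_sort S a (· ≤ L[k])).symm)
    obtain ⟨e, heT, heD⟩ := Finset.exists_mem_notMem_of_card_lt_card hcard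
    rw [Finset.mem_filter] at heT
    refine (Finset.inf_le heT.1).trans ?_
    rw [if_neg fun h => heD (Finset.mem_inter.mpr ⟨h, heT.1⟩), add_zero]
    exact_mod_cast heT.2

lemma exists_hopArrival_le_inf (S : Finset α) (a : α → ℕ) (δ k : ℕ) :
    ∃ F ⊆ S, F.card ≤ k ∧ hopArrival δ ((S.val.map a).sort (· ≤ ·)) k ≤
      S.inf (fun e => ((a e + if e ∈ F then δ else 0 : ℕ) : ℕ∞)) := by
  set L := (S.val.map a).sort (· ≤ ·)
  have hsorted : L.SortedLE := (Multiset.pairwise_sort _ _).sortedLE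
  have hdelayed : ∀ e ∈ S, hopArrival δ L k ≤ ((a e + δ : ℕ) : ℕ∞) := fun e he =>
    hopArrival_le_add_of_mem hsorted (by simpa [L, Multiset.mem_sort] using ⟨e, he, rfl⟩)
  by_cases hk : k < L.length
  · -- delay the arcs arriving strictly before the `k + 1`-st smallest arrival time
    refine ⟨S.filter (fun e => a e < L[k]), Finset.filter_subset _ _, ?_,
      Finset.le_inf fun e he => ?_⟩
    · exact (card_filter_eq_countP_sort S a (· < L[k])).trans_le
        (hsorted.countP_lt_getElem_le hk)
    · split_ifs with hF
      · exact hdelayed e he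
      · have hle : L[k] ≤ a e := not_lt.mp fun h => hF (Finset.mem_filter.mpr ⟨he, h⟩)
        exact (hopArrival_le_getElem hk).trans (by exact_mod_cast hle)
  · refine ⟨S, subset_rfl, ?_, Finset.le_inf fun e he => ?_⟩
    · have : L.length = S.card := by simp [L, Multiset.length_sort]
      omega
    · rw [if_pos he]
      exact hdelayed e he

end HopArrival

section Walks

lemma follows_append_singleton {P : List (TimeArc V)} (hP : P ≠ []) {R : List V}
    {e : TimeArc V} {w : V} : Follows (P ++ [e]) (R ++ [w]) ↔ Follows P R ∧ e.dst = w := by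
  obtain ⟨f, P, rfl⟩ := List.exists_cons_of_ne_nil hP
  show visits (f :: (P ++ [e])) = R ++ [w] ↔ visits (f :: P) = R ∧ e.dst = w
  simp only [visits, List.map_cons, List.map_append, List.map_nil]
  rw [← List.cons_append, ← List.cons_append, List.append_singleton_inj]

lemma Follows.getLast?_eq_some_dst {P : List (TimeArc V)} {R : List V} (hF : Follows P R)
    {g : TimeArc V} (hg : P.getLast? = some g) : R.getLast? = some g.dst := by
  cases P with
  | nil => simp at hg
  | cons f P =>
    rw [← show visits (f :: P) = R from hF, visits, List.map_cons, List.getLast?_cons_cons,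
      ← List.map_cons, List.getLast?_map, hg]
    rfl

variable [DecidableEq V]

def TimeArc.delayedArrival (D : Finset (TimeArc V)) (δ : ℕ) (e : TimeArc V) : ℕ :=
  e.time + e.trav + if e ∈ D then δ else 0

lemma TimeArc.time_le_delayedArrival (D : Finset (TimeArc V)) (δ : ℕ) (e : TimeArc V) :
    e.time ≤ e.delayedArrival D δ := by
  unfold TimeArc.delayedArrival
  omega

lemma TimeArc.delayedArrival_mono {D D' : Finset (TimeArc V)} (h : D ⊆ D') (δ : ℕ)
    (e : TimeArc V) : e.delayedArrival D δ ≤ e.delayedArrival D' δ := by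
  unfold TimeArc.delayedArrival
  split_ifs with hD hD' <;> first | omega | exact absurd (h hD) hD'

lemma IsTDWalk.of_delayedArrival_le {E D D' : Finset (TimeArc V)} {δ : ℕ} {P : List (TimeArc V)}
    (h : ∀ e ∈ P, e.delayedArrival D' δ ≤ e.delayedArrival D δ) (hP : IsTDWalk E D δ P) :
    IsTDWalk E D' δ P :=
  ⟨hP.1, List.IsChain.imp_of_mem_imp
    (fun e _ he _ hef => ⟨hef.1, (h e he).trans hef.2⟩) hP.2⟩

lemma isTDWalk_append_singleton {E D : Finset (TimeArc V)} {δ : ℕ} {P : List (TimeArc V)}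
    {e : TimeArc V} :
    IsTDWalk E D δ (P ++ [e]) ↔ IsTDWalk E D δ P ∧ e ∈ E ∧
      ∀ g ∈ P.getLast?, e.src = g.dst ∧ g.delayedArrival D δ ≤ e.time := by
  constructor
  · rintro ⟨hPE, hchain⟩
    obtain ⟨hchain', -, hlast⟩ := List.isChain_append.mp hchain
    exact ⟨⟨fun a ha => hPE a (List.mem_append_left _ ha), hchain'⟩, hPE e (by simp),
      fun g hg => hlast g hg e rfl⟩
  · rintro ⟨⟨hPE, hchain⟩, heE, hlast⟩
    refine ⟨fun a ha => ?_, List.isChain_append.mpr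
      ⟨hchain, List.isChain_singleton e, fun g hg f hf => ?_⟩⟩
    · rcases List.mem_append.mp ha with ha | ha
      · exact hPE a ha
      · rwa [List.mem_singleton.mp ha]
    · obtain rfl : e = f := by simpa using hf
      exact hlast g hg

lemma IsTDWalk.delayedArrival_le_of_getLast? {E D : Finset (TimeArc V)} {δ : ℕ}
    {P : List (TimeArc V)} (hP : IsTDWalk E D δ P) {g e : TimeArc V} (hg : P.getLast? = some g)
    (he : e ∈ P) : e.delayedArrival D δ ≤ g.delayedArrival D δ := by
  have hchain : (P.map (·.delayedArrival D δ)).IsChain (· ≤ ·) :=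
    (List.isChain_map _).mpr <| hP.2.imp fun e f hef =>
      hef.2.trans (TimeArc.time_le_delayedArrival D δ f)
  rw [← List.dropLast_append_getLast? g hg] at hchain he
  have hpair := hchain.pairwise
  rw [List.map_append, List.pairwise_append] at hpair
  rcases List.mem_append.mp he with he | he
  · exact hpair.2.2 _ (List.mem_map_of_mem he) _ (by simp)
  · rw [List.mem_singleton.mp he]

def arrivalTimes (E D : Finset (TimeArc V)) (δ : ℕ) (R : List V) : Set ℕ∞ :=
  {m | ∃ P : List (TimeArc V), IsTDWalk E D δ P ∧ Follows P R ∧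
    ∃ e : TimeArc V, P.getLast? = some e ∧ m = e.delayedArrival D δ}

lemma earliestArrival_eq_sInf (E D : Finset (TimeArc V)) (δ : ℕ) (R : List V) :
    earliestArrival E D δ R = sInf (arrivalTimes E D δ R) :=
  rfl

-- `earliestArrival` is `⊤` on a single-vertex route, where no walk has a last arc; like
-- `worstArrival`, `readyTime` takes the value `0` there.
noncomputable def readyTime (E D : Finset (TimeArc V)) (δ : ℕ) (R : List V) : ℕ∞ :=
  if R.length ≤ 1 then 0 else earliestArrival E D δ R

section

variable {E D D' : Finset (TimeArc V)} {δ : ℕ} {R : List V}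

lemma readyTime_le_of_mem {m : ℕ∞} (hm : m ∈ arrivalTimes E D δ R) :
    readyTime E D δ R ≤ m := by
  unfold readyTime
  split_ifs
  · exact zero_le
  · exact sInf_le hm

lemma readyTime_mem_arrivalTimes (hR : 2 ≤ R.length) (h : readyTime E D δ R ≠ ⊤) :
    readyTime E D δ R ∈ arrivalTimes E D δ R := by
  rw [readyTime, if_neg (by omega)] at h ⊢
  exact csInf_mem (Set.nonempty_iff_ne_empty.mpr fun hempty => h (by
    rw [earliestArrival_eq_sInf, hempty, sInf_empty]))

lemma readyTime_le_readyTime (h : ∀ m ∈ arrivalTimes E D' δ R, readyTime E D δ R ≤ m) :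
    readyTime E D δ R ≤ readyTime E D' δ R := by
  by_cases hR : R.length ≤ 1
  · simp [readyTime, hR]
  · conv_rhs => rw [readyTime, if_neg hR]
    exact le_sInf h

lemma readyTime_mono (h : D ⊆ D') : readyTime E D δ R ≤ readyTime E D' δ R :=
  readyTime_le_readyTime fun _ ⟨P, hP, hF, g, hg, hm⟩ =>
    (readyTime_le_of_mem ⟨P, hP.of_delayedArrival_le fun e _ => e.delayedArrival_mono h δ, hF,
      g, hg, rfl⟩).trans (hm ▸ by exact_mod_cast g.delayedArrival_mono h δ)

lemma readyTime_le_of_forall_time_lt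
    (h : ∀ e : TimeArc V, (e.time : ℕ∞) < readyTime E D δ R → (e ∈ D' ↔ e ∈ D)) :
    readyTime E D δ R ≤ readyTime E D' δ R := by
  refine readyTime_le_readyTime fun _ ⟨P, hP, hF, g, hg, hm⟩ => ?_
  subst hm
  refine le_of_not_gt fun hlt => ?_
  have hagree : ∀ e ∈ P, e.delayedArrival D δ = e.delayedArrival D' δ := fun e he => by
    have htime : e.time ≤ g.delayedArrival D' δ :=
      (e.time_le_delayedArrival D' δ).trans (hP.delayedArrival_le_of_getLast? hg he)
    have hearly : (e.time : ℕ∞) < readyTime E D δ R :=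
      lt_of_le_of_lt (by exact_mod_cast htime) hlt
    simp only [TimeArc.delayedArrival, h e hearly]
  refine hlt.not_ge (readyTime_le_of_mem ⟨P, hP.of_delayedArrival_le fun e he => (hagree e he).le,
    hF, g, hg, ?_⟩)
  rw [hagree g (List.mem_of_getLast? hg)]

end

end Walks

section LastHop

variable [DecidableEq V] {E D : Finset (TimeArc V)} {δ : ℕ}

def departAfter (E : Finset (TimeArc V)) (v w : V) (t : ℕ∞) : Finset (TimeArc V) :=
  E.filter fun e => e.src = v ∧ e.dst = w ∧ t ≤ e.time

lemma departAfter_anti {v w : V} {t t' : ℕ∞} (h : t ≤ t') :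
    departAfter E v w t' ⊆ departAfter E v w t :=
  Finset.monotone_filter_right _ fun _ _ he => ⟨he.1, he.2.1, h.trans he.2.2⟩

lemma arrivalFn_eq_hopArrival (v w : V) (t : ℕ∞) (k : ℕ) :
    arrivalFn E δ v w t k =
      hopArrival δ
        (((departAfter E v w t).val.map fun e => e.time + e.trav).sort (· ≤ ·)) k := by
  induction t using ENat.recTopCoe with
  | top => simp [arrivalFn, departAfter, hopArrival]
  | coe t =>
    simp only [arrivalFn, ENat.natCast_ne_top, if_false, departAfter, Nat.cast_le]
    rfl

lemma IsTDWalk.mem_departAfter_of_getLast? {P : List (TimeArc V)} {Q : List V} {v w : V}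
    {e : TimeArc V} (hP : IsTDWalk E D δ P) (hF : Follows P (Q ++ [v, w]))
    (he : P.getLast? = some e) : e ∈ departAfter E v w (readyTime E D δ (Q ++ [v])) := by
  rw [← List.dropLast_append_getLast? e he] at hP hF
  obtain ⟨hP', heE, hlast⟩ := isTDWalk_append_singleton.mp hP
  rcases eq_or_ne P.dropLast [] with hnil | hne
  · have hvisits : [e.src, e.dst] = Q ++ [v, w] := by rw [hnil] at hF; exact hF
    obtain rfl : Q = [] :=
      List.eq_nil_of_length_eq_zero (by simpa using congrArg List.length hvisits)
    simp only [List.nil_append, List.cons.injEq, and_true] at hvisits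
    exact Finset.mem_filter.mpr ⟨heE, hvisits.1, hvisits.2, by simp [readyTime]⟩
  · rw [show Q ++ [v, w] = Q ++ [v] ++ [w] by simp, follows_append_singleton hne] at hF
    obtain ⟨g, hg⟩ : ∃ g, P.dropLast.getLast? = some g :=
      ⟨_, List.getLast?_eq_some_getLast hne⟩
    have hvg : v = g.dst := by simpa using hF.1.getLast?_eq_some_dst hg
    obtain ⟨hlink, harr⟩ := hlast g hg
    have hready : readyTime E D δ (Q ++ [v]) ≤ g.delayedArrival D δ :=
      readyTime_le_of_mem ⟨_, hP', hF.1, g, hg, rfl⟩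
    exact Finset.mem_filter.mpr
      ⟨heE, hlink.trans hvg.symm, hF.2, hready.trans (by exact_mod_cast harr)⟩

lemma delayedArrival_mem_arrivalTimes {Q : List V} {v w : V} {e : TimeArc V}
    (he : e ∈ departAfter E v w (readyTime E D δ (Q ++ [v]))) :
    (e.delayedArrival D δ : ℕ∞) ∈ arrivalTimes E D δ (Q ++ [v, w]) := by
  obtain ⟨heE, hsrc, hdst, hready⟩ := Finset.mem_filter.mp he
  rcases eq_or_ne Q [] with rfl | hQ
  · refine ⟨[e], ⟨by simpa using heE, List.isChain_singleton e⟩, ?_, e, rfl, rfl⟩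
    show [e.src, e.dst] = [v, w]
    rw [hsrc, hdst]
  · have hlen : 2 ≤ (Q ++ [v]).length := by
      have := List.length_pos_of_ne_nil hQ
      simp only [List.length_append, List.length_singleton]
      omega
    obtain ⟨P, hP, hF, g, hg, hgm⟩ :=
      readyTime_mem_arrivalTimes hlen (ne_top_of_le_ne_top (ENat.natCast_ne_top _) hready)
    rw [hgm] at hready
    have hPne : P ≠ [] := by rintro rfl; simp at hg
    have hvg : v = g.dst := by simpa using hF.getLast?_eq_some_dst hg
    refine ⟨P ++ [e], isTDWalk_append_singleton.mpr ⟨hP, heE, fun g' hg' => ?_⟩, ?_, e,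
      by simp, rfl⟩
    · obtain rfl : g = g' := by simpa [hg] using hg'
      exact ⟨hsrc.trans hvg, by exact_mod_cast hready⟩
    · rw [show Q ++ [v, w] = Q ++ [v] ++ [w] by simp, follows_append_singleton hPne]
      exact ⟨hF, hdst⟩

lemma arrivalTimes_append_pair (Q : List V) (v w : V) :
    arrivalTimes E D δ (Q ++ [v, w]) =
      (fun e : TimeArc V => (e.delayedArrival D δ : ℕ∞)) ''
        departAfter E v w (readyTime E D δ (Q ++ [v])) := by
  ext m
  constructor
  · rintro ⟨P, hP, hF, e, he, rfl⟩
    exact ⟨e, hP.mem_departAfter_of_getLast? hF he, rfl⟩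
  · rintro ⟨e, he, rfl⟩
    exact delayedArrival_mem_arrivalTimes he

lemma earliestArrival_append_pair (Q : List V) (v w : V) :
    earliestArrival E D δ (Q ++ [v, w]) =
      (departAfter E v w (readyTime E D δ (Q ++ [v]))).inf
        fun e => (e.delayedArrival D δ : ℕ∞) := by
  rw [earliestArrival_eq_sInf, arrivalTimes_append_pair, Finset.inf_eq_sInf_image]

lemma worstArrival_eq_sup (E : Finset (TimeArc V)) (δ : ℕ) (R : List V) (y : ℕ) :
    worstArrival E δ R y = {D ∈ E.powerset | D.card ≤ y}.sup fun D => readyTime E D δ R := by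
  unfold worstArrival
  split_ifs with hR
  · exact (le_antisymm (Finset.sup_le fun D _ => by simp [readyTime, hR]) zero_le).symm
  · rw [Finset.sup_eq_sSup_image]
    congr 1
    ext m
    simp [readyTime, hR, eq_comm, and_assoc]

lemma exists_readyTime_eq_worstArrival (E : Finset (TimeArc V)) (δ : ℕ) (R : List V) (y : ℕ) :
    ∃ D ⊆ E, D.card ≤ y ∧ readyTime E D δ R = worstArrival E δ R y := by
  obtain ⟨D, hD, heq⟩ := Finset.exists_mem_eq_sup {D ∈ E.powerset | D.card ≤ y}
    ⟨∅, by simp⟩ fun D => readyTime E D δ R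
  rw [Finset.mem_filter, Finset.mem_powerset] at hD
  exact ⟨D, hD.1, hD.2, by rw [worstArrival_eq_sup, heq]⟩

lemma readyTime_le_worstArrival (R : List V) {y : ℕ} (hDE : D ⊆ E) (hD : D.card ≤ y) :
    readyTime E D δ R ≤ worstArrival E δ R y := by
  rw [worstArrival_eq_sup]
  exact Finset.le_sup (f := fun D => readyTime E D δ R) (by simp [hDE, hD])

lemma readyTime_append_pair (E D : Finset (TimeArc V)) (δ : ℕ) (Q : List V) (v w : V) :
    readyTime E D δ (Q ++ [v, w]) = earliestArrival E D δ (Q ++ [v, w]) :=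
  if_neg (by simp)

lemma exists_earliestArrival_le_arrivalFn (Q : List V) (v w : V) {y : ℕ} (hDE : D ⊆ E)
    (hD : D.card ≤ y) :
    ∃ y' ≤ y, earliestArrival E D δ (Q ++ [v, w]) ≤
      arrivalFn E δ v w (worstArrival E δ (Q ++ [v]) y') (y - y') := by
  set S := departAfter E v w (readyTime E D δ (Q ++ [v]))
  have hready : readyTime E D δ (Q ++ [v]) ≤ readyTime E (D \ S) δ (Q ++ [v]) :=
    readyTime_le_of_forall_time_lt fun e he => by
      have heS : e ∉ S := fun heS => (Finset.mem_filter.mp heS).2.2.2.not_gt he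
      simp [heS]
  set t := worstArrival E δ (Q ++ [v]) (D \ S).card
  have hS : departAfter E v w t ⊆ S :=
    departAfter_anti (hready.trans (readyTime_le_worstArrival _
      (Finset.sdiff_subset.trans hDE) le_rfl))
  have hcard : (D ∩ departAfter E v w t).card ≤ y - (D \ S).card := by
    have hsplit := Finset.card_sdiff_add_card_inter D S
    have hsub := Finset.card_le_card (Finset.inter_subset_inter_left hS (s := D))
    omega
  refine ⟨(D \ S).card, (Finset.card_le_card Finset.sdiff_subset).trans hD, ?_⟩
  rw [earliestArrival_append_pair, arrivalFn_eq_hopArrival]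
  exact (Finset.inf_mono hS).trans (inf_le_hopArrival _ D _ hcard)

lemma exists_arrivalFn_le_earliestArrival (E : Finset (TimeArc V)) (δ : ℕ) (Q : List V)
    (v w : V) (y' k : ℕ) :
    ∃ D ⊆ E, D.card ≤ y' + k ∧
      arrivalFn E δ v w (worstArrival E δ (Q ++ [v]) y') k ≤
        earliestArrival E D δ (Q ++ [v, w]) := by
  obtain ⟨D₁, hD₁E, hD₁, hworst⟩ := exists_readyTime_eq_worstArrival E δ (Q ++ [v]) y'
  set S := departAfter E v w (worstArrival E δ (Q ++ [v]) y')
  obtain ⟨F, hFS, hF, hhop⟩ := exists_hopArrival_le_inf S (fun e => e.time + e.trav) δ k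
  refine ⟨D₁ ∪ F, Finset.union_subset hD₁E (hFS.trans (Finset.filter_subset _ _)),
    (Finset.card_union_le _ _).trans (by omega), ?_⟩
  rw [arrivalFn_eq_hopArrival, earliestArrival_append_pair]
  refine hhop.trans ((Finset.inf_mono (departAfter_anti ?_)).trans
    (Finset.inf_mono_fun fun e _ => ?_))
  · rw [← hworst]
    exact readyTime_mono Finset.subset_union_left
  · exact_mod_cast e.delayedArrival_mono Finset.subset_union_right δ

lemma worstArrival_append_pair (E : Finset (TimeArc V)) (δ : ℕ) (Q : List V) (v w : V)
    (y : ℕ) :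
    worstArrival E δ (Q ++ [v, w]) y = (Finset.range (y + 1)).sup fun y' =>
      arrivalFn E δ v w (worstArrival E δ (Q ++ [v]) y') (y - y') := by
  rw [worstArrival_eq_sup]
  refine le_antisymm (Finset.sup_le fun D hD => ?_) (Finset.sup_le fun y' hy' => ?_)
  · rw [Finset.mem_filter, Finset.mem_powerset] at hD
    obtain ⟨y', hy', hle⟩ := exists_earliestArrival_le_arrivalFn Q v w hD.1 hD.2
    rw [readyTime_append_pair]
    exact hle.trans (Finset.le_sup (f := fun y' =>
      arrivalFn E δ v w (worstArrival E δ (Q ++ [v]) y') (y - y'))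
      (Finset.mem_range.mpr (by omega)))
  · obtain ⟨D, hDE, hD, hle⟩ := exists_arrivalFn_le_earliestArrival E δ Q v w y' (y - y')
    rw [← readyTime_append_pair] at hle
    rw [Finset.mem_range] at hy'
    exact hle.trans (Finset.le_sup (f := fun D => readyTime E D δ (Q ++ [v, w]))
      (by simp only [Finset.mem_filter, Finset.mem_powerset]; exact ⟨hDE, by omega⟩))

theorem dpRev_eq_worstArrival_reverse (E : Finset (TimeArc V)) (δ : ℕ) :
    ∀ (l : List V) (y : ℕ), dpRev E δ l y = worstArrival E δ l.reverse y
  | [], _ => by simp [dpRev, worstArrival]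
  | [_], _ => by simp [dpRev, worstArrival]
  | w :: v :: l, y => by
    rw [dpRev, show (w :: v :: l).reverse = l.reverse ++ [v, w] by simp,
      worstArrival_append_pair]
    refine Finset.sup_congr rfl fun y' _ => ?_
    rw [dpRev_eq_worstArrival_reverse E δ (v :: l) y', List.reverse_cons]

end LastHop

theorem statement8 {V : Type} [DecidableEq V] (E : Finset (TimeArc V))
    (δ x : ℕ) (R : List V) :
    ∀ j : ℕ, 1 ≤ j → j ≤ R.length → ∀ y : ℕ, y ≤ x →
      dpRev E δ (R.take j).reverse y = worstArrival E δ (R.take j) y := by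
  intro j _ _ y _
  simpa using dpRev_eq_worstArrival_reverse E δ (R.take j).reverse y
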